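/- arXiv:1510.07919 — 6 statements merged into one kernel-verified Lean document; each statement's English description precedes it below -/
import Mathlib

section
/- Let f be a valuation of a near polygon N with M_f ≥ 1. Then the set H_f of points of N with f-value strictly less than M_f is a hyperplane of N, i.e., a nonempty proper subset of the point set such that every line of N has either exactly one or all of its points in H_f. -/
/-- The collinearity graph of a point-line geometry whose lines are given as
sets of points: two points are adjacent when they are distinct and lie on a
common line. -/
def collGraph {P : Type*} (Lines : Set (Set P)) : SimpleGraph P where
  Adj x y := x ≠ y ∧ ∃ L ∈ Lines, x ∈ L ∧ y ∈ L
  symm := by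
    constructor
    rintro x y ⟨hxy, L, hL, hx, hy⟩
    exact ⟨hxy.symm, L, hL, hy, hx⟩
  loopless := by
    constructor
    rintro x ⟨h, -⟩
    exact h rfl

/-- A near `2d`-gon: a partial linear space (every line carries at least two
points, two distinct points lie on at most one common line) whose collinearity
graph is connected of diameter `d`, and in which for every point `x` and every
line `L` there is a unique point of `L` nearest to `x`.  A near hexagon is a
`NearPolygon P 3`, a near octagon is a `NearPolygon P 4`. -/
structure NearPolygon (P : Type*) (d : ℕ) where
  Lines : Set (Set P)
  two_pts : ∀ L ∈ Lines, ∃ x ∈ L, ∃ y ∈ L, x ≠ y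
  unique_line : ∀ L₁ ∈ Lines, ∀ L₂ ∈ Lines, ∀ x y : P,
    x ≠ y → x ∈ L₁ → y ∈ L₁ → x ∈ L₂ → y ∈ L₂ → L₁ = L₂
  connected : (collGraph Lines).Connected
  diam_le : ∀ x y : P, (collGraph Lines).dist x y ≤ d
  diam_eq : ∃ x y : P, (collGraph Lines).dist x y = d
  near : ∀ (x : P), ∀ L ∈ Lines, ∃! y, y ∈ L ∧
    ∀ z ∈ L, (collGraph Lines).dist x y ≤ (collGraph Lines).dist x z

/-- A near polygon has order `(s,t)` if every line is incident with exactly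
`s+1` points and every point is incident with exactly `t+1` lines. -/
def NearPolygon.hasOrder {P : Type*} {d : ℕ} (N : NearPolygon P d) (s t : ℕ) : Prop :=
  (∀ L ∈ N.Lines, L.ncard = s + 1) ∧
  (∀ x : P, {L | L ∈ N.Lines ∧ x ∈ L}.ncard = t + 1)

/-- A semi-valuation: every line `L` contains a unique point `xL` such that
every other point of `L` has value `f xL + 1`. -/
def IsSemiValuation {P : Type*} (Lines : Set (Set P)) (f : P → ℤ) : Prop :=
  ∀ L ∈ Lines, ∃! xL, xL ∈ L ∧ ∀ x ∈ L, x ≠ xL → f x = f xL + 1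

/-- A valuation: a semi-valuation whose minimum value is `0`. -/
def IsValuation {P : Type*} (Lines : Set (Set P)) (f : P → ℤ) : Prop :=
  IsSemiValuation Lines f ∧ (∀ x, 0 ≤ f x) ∧ (∃ x, f x = 0)

/-- `ι` realizes the geometry with lines `LQ` as a full isometrically embedded
subgeometry of the geometry with lines `LP` (lines being identified with their
point sets, fullness amounts to lines mapping onto lines). -/
structure IsFullIsomEmb {Q P : Type*} (LQ : Set (Set Q)) (LP : Set (Set P))
    (ι : Q → P) : Prop where
  inj : Function.Injective ι
  line_map : ∀ L ∈ LQ, ι '' L ∈ LP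
  isometric : ∀ x y : Q, (collGraph LP).dist (ι x) (ι y) = (collGraph LQ).dist x y

/-- The distance `d(x, P)` from a point `x` of the ambient geometry to the
point set of the embedded subgeometry. -/
noncomputable def distToSub {Q P : Type*} (LP : Set (Set P)) (ι : Q → P) (x : P) : ℕ :=
  sInf (Set.range fun z : Q => (collGraph LP).dist x (ι z))

/-- The function `f_x : y ↦ d(x, y) - d(x, P)` induced on the embedded
subgeometry by a point `x` of the ambient geometry. -/
noncomputable def inducedVal {Q P : Type*} (LP : Set (Set P)) (ι : Q → P) (x : P) :
    Q → ℤ :=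
  fun y => ((collGraph LP).dist x (ι y) : ℤ) - (distToSub LP ι x : ℤ)

/-- Two valuations are neighboring if `|f1 x - f2 x + ε| ≤ 1` for all `x`,
for some integer `ε`. -/
def Neighboring {P : Type*} (f1 f2 : P → ℤ) : Prop :=
  ∃ ε : ℤ, ∀ x, |f1 x - f2 x + ε| ≤ 1

/-- The semi-valuation `f3'` built from two neighboring valuations `f1, f2`
and a compatible `ε`. -/
def starFun {P : Type*} (f1 f2 : P → ℤ) (ε : ℤ) (x : P) : ℤ :=
  if f1 x = f2 x - ε then f1 x - 1 else max (f1 x) (f2 x - ε)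

/-- `StarRel f1 f2 f3` expresses `f1 * f2 = f3`: some `ε ∈ {-1,0,1}` witnesses
that `f1` and `f2` are neighboring, and, for every such `ε`, subtracting the
minimum value `m` of `f3' = starFun f1 f2 ε` from `f3'` yields `f3`. -/
def StarRel {P : Type*} (f1 f2 f3 : P → ℤ) : Prop :=
  (∃ ε ∈ ({-1, 0, 1} : Set ℤ), ∀ x, |f1 x - f2 x + ε| ≤ 1) ∧
  ∀ ε ∈ ({-1, 0, 1} : Set ℤ), (∀ x, |f1 x - f2 x + ε| ≤ 1) →
    ∃ m : ℤ, IsLeast (Set.range (starFun f1 f2 ε)) m ∧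
      ∀ x, f3 x = starFun f1 f2 ε x - m

/-- A subspace: together with two distinct collinear points it contains every
line through them. -/
def IsSubspace {P : Type*} (Lines : Set (Set P)) (X : Set P) : Prop :=
  ∀ L ∈ Lines, ∀ x ∈ L, ∀ y ∈ L, x ≠ y → x ∈ X → y ∈ X → L ⊆ X

/-- A convex subspace: a subspace containing every point on a shortest path
between any two of its points. -/
def IsConvexSubspace {P : Type*} (Lines : Set (Set P)) (X : Set P) : Prop :=
  IsSubspace Lines X ∧
  ∀ x ∈ X, ∀ y ∈ X, ∀ z : P,
    (collGraph Lines).dist x z + (collGraph Lines).dist z y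
      = (collGraph Lines).dist x y → z ∈ X

/-- A quad: a convex subspace of diameter `2` inducing (with the lines fully
contained in it) a nondegenerate generalized quadrangle. -/
def IsQuad {P : Type*} (Lines : Set (Set P)) (Q : Set P) : Prop :=
  IsConvexSubspace Lines Q ∧
  (∀ x ∈ Q, ∀ y ∈ Q, (collGraph Lines).dist x y ≤ 2) ∧
  (∃ x ∈ Q, ∃ y ∈ Q, (collGraph Lines).dist x y = 2) ∧
  (∀ x ∈ Q, ∀ L ∈ Lines, L ⊆ Q → x ∉ L →
    ∃! y, y ∈ L ∧ (collGraph Lines).Adj x y) ∧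
  (∀ x ∈ Q, ∃ L₁ ∈ Lines, ∃ L₂ ∈ Lines,
    L₁ ⊆ Q ∧ L₂ ⊆ Q ∧ x ∈ L₁ ∧ x ∈ L₂ ∧ L₁ ≠ L₂) ∧
  (∃ x ∈ Q, ∃ y ∈ Q, x ≠ y ∧ ¬ (collGraph Lines).Adj x y)

/-- A quad has order `(s,t')` if each of its lines has `s+1` points and each
of its points is on exactly `t'+1` lines contained in the quad. -/
def QuadHasOrder {P : Type*} (Lines : Set (Set P)) (Q : Set P) (s t' : ℕ) : Prop :=
  (∀ L ∈ Lines, L ⊆ Q → L.ncard = s + 1) ∧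
  (∀ x ∈ Q, {L | L ∈ Lines ∧ L ⊆ Q ∧ x ∈ L}.ncard = t' + 1)


lemma exists_mem_ne_of_two_pts {P : Type*} {Lines : Set (Set P)}
    (htwo : ∀ L ∈ Lines, ∃ x ∈ L, ∃ y ∈ L, x ≠ y)
    {L : Set P} (hL : L ∈ Lines) (a : P) : ∃ y ∈ L, y ≠ a := by
  obtain ⟨x, hx, y, hy, hxy⟩ := htwo L hL
  by_cases hxa : x = a
  · exact ⟨y, hy, hxa ▸ hxy.symm⟩
  · exact ⟨x, hx, hxa⟩

namespace IsSemiValuation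

variable {P : Type*} {Lines : Set (Set P)} {f : P → ℤ}

theorem exists_unique_lt_or_forall_lt (hf : IsSemiValuation Lines f)
    (htwo : ∀ L ∈ Lines, ∃ x ∈ L, ∃ y ∈ L, x ≠ y) {M : ℤ} (hM : M ∈ upperBounds (Set.range f))
    {L : Set P} (hL : L ∈ Lines) :
    (∃! x, x ∈ L ∧ f x < M) ∨ ∀ x ∈ L, f x < M := by
  obtain ⟨xL, ⟨hxL, hval⟩, -⟩ := hf L hL
  obtain ⟨y, hy, hyxL⟩ := exists_mem_ne_of_two_pts htwo hL xL
  have hy_val : f y = f xL + 1 := hval y hy hyxL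
  have hy_le : f y ≤ M := hM ⟨y, rfl⟩
  -- All points of `L` other than `xL` share the value `f y`; whether it reaches `M` decides the case.
  rcases hy_le.lt_or_eq with hy_lt | hy_eq
  · refine .inr fun x hx => ?_
    by_cases hx' : x = xL
    · subst hx'; omega
    · have := hval x hx hx'; omega
  · refine .inl ⟨xL, ⟨hxL, by omega⟩, fun x ⟨hx, hxM⟩ => ?_⟩
    by_contra hx'
    have := hval x hx hx'
    omega

end IsSemiValuation

/-- If `f` is a valuation of a near polygon `N` with maximum
value `M ≥ 1`, then `H_f = {x | f x < M}` is a hyperplane: a nonempty proper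
subset of the point set such that every line has exactly one or all of its
points in it. -/
theorem hyperplane_of_valuation {P : Type*} {d : ℕ} (N : NearPolygon P d)
    (f : P → ℤ) (hf : IsValuation N.Lines f) (M : ℤ)
    (hM : IsGreatest (Set.range f) M) (hM1 : 1 ≤ M) :
    {x | f x < M}.Nonempty ∧ {x | f x < M} ≠ Set.univ ∧
      ∀ L ∈ N.Lines, (∃! x, x ∈ L ∧ f x < M) ∨ (∀ x ∈ L, f x < M) := by
  obtain ⟨hsemi, -, x₀, hx₀⟩ := hf
  obtain ⟨⟨xM, hxM⟩, hub⟩ := hM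
  refine ⟨⟨x₀, show f x₀ < M by omega⟩, ?_, fun L hL =>
    hsemi.exists_unique_lt_or_forall_lt N.two_pts hub hL⟩
  exact (Set.ne_univ_iff_exists_notMem _).2 ⟨xM, by simp [hxM]⟩
end

section
/- Let N = (P, L) be a near polygon that is a full isometrically embedded subgeometry of a near polygon N'. Then for every point x of N', the function f_x : P → ℤ defined by f_x(y) = d_{N'}(x,y) − d_{N'}(x,P), where d_{N'}(x,P) denotes the minimum of d_{N'}(x,y) over y ∈ P, is a valuation of N. -/
/-!
For a point `x` of a near polygon, `y ↦ d(x, y)` is a semi-valuation: on each line the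
nearest point to `x` is unique, and every other point of the line is one step further
away. Restricting along a full embedding keeps this property, since lines of the
subgeometry are lines of the ambient geometry, and subtracting the minimum `d(x, P)`
normalizes it to a valuation.
-/

section

open Set

variable {P Q : Type*}

theorem IsSemiValuation.sub_const {Lines : Set (Set P)} {f : P → ℤ}
    (hf : IsSemiValuation Lines f) (c : ℤ) : IsSemiValuation Lines fun y => f y - c := by
  simp only [IsSemiValuation, sub_add_eq_add_sub, sub_left_inj]
  exact hf

theorem IsSemiValuation.isValuation_sub {Lines : Set (Set P)} {f : P → ℤ} {m : ℤ}
    (hf : IsSemiValuation Lines f) (hm : IsLeast (range f) m) :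
    IsValuation Lines fun y => f y - m := by
  obtain ⟨⟨y, hy⟩, hle⟩ := hm
  exact ⟨hf.sub_const m, fun z => sub_nonneg.2 (hle ⟨z, rfl⟩), ⟨y, sub_eq_zero.2 hy⟩⟩

theorem IsSemiValuation.comp_of_image_mem {LQ : Set (Set Q)} {LP : Set (Set P)}
    {f : P → ℤ} {ι : Q → P} (hf : IsSemiValuation LP f) (hinj : Function.Injective ι)
    (hmap : ∀ L ∈ LQ, ι '' L ∈ LP) : IsSemiValuation LQ (f ∘ ι) := by
  intro L hL
  obtain ⟨_, ⟨⟨w, hwL, rfl⟩, hw⟩, huniq⟩ := hf _ (hmap L hL)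
  refine ⟨w, ⟨hwL, fun u hu hne => hw _ (mem_image_of_mem ι hu) (hinj.ne hne)⟩, ?_⟩
  rintro w' ⟨hw'L, hw'⟩
  refine hinj (huniq _ ⟨mem_image_of_mem ι hw'L, ?_⟩)
  rintro _ ⟨u, hu, rfl⟩ hne
  exact hw' u hu fun h => hne (congrArg ι h)

namespace NearPolygon

variable {d : ℕ} (N : NearPolygon P d)

theorem dist_eq_add_one_of_isNearest {x y z : P} {L : Set P} (hL : L ∈ N.Lines)
    (hyL : y ∈ L) (hy : ∀ w ∈ L, (collGraph N.Lines).dist x y ≤ (collGraph N.Lines).dist x w)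
    (hzL : z ∈ L) (hzy : z ≠ y) :
    (collGraph N.Lines).dist x z = (collGraph N.Lines).dist x y + 1 := by
  have hyz : (collGraph N.Lines).dist y z = 1 :=
    SimpleGraph.dist_eq_one_iff_adj.2 ⟨hzy.symm, L, hL, hyL, hzL⟩
  have hle := N.connected.dist_triangle (u := x) (v := y) (w := z)
  have hge := hy z hzL
  -- `z` cannot be as close to `x` as `y`, or it would be a second nearest point of `L`.
  have hne : (collGraph N.Lines).dist x z ≠ (collGraph N.Lines).dist x y := fun heq =>
    hzy ((N.near x L hL).unique ⟨hzL, fun w hw => heq ▸ hy w hw⟩ ⟨hyL, hy⟩)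
  omega

theorem isSemiValuation_dist (x : P) :
    IsSemiValuation N.Lines fun y => ((collGraph N.Lines).dist x y : ℤ) := by
  intro L hL
  obtain ⟨y, ⟨hyL, hy⟩, -⟩ := N.near x L hL
  have hsucc := fun z (hzL : z ∈ L) hzy => N.dist_eq_add_one_of_isNearest hL hyL hy hzL hzy
  refine ⟨y, ⟨hyL, fun z hzL hzy => by simp only [hsucc z hzL hzy, Nat.cast_succ]⟩, ?_⟩
  rintro y' ⟨hy'L, hy'⟩
  by_contra hne
  have h₁ := hy' y hyL (Ne.symm hne)
  dsimp only at h₁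
  have h₂ := hsucc y' hy'L hne
  omega

end NearPolygon

theorem isLeast_range_dist_distToSub [Nonempty Q] (LP : Set (Set P)) (ι : Q → P) (x : P) :
    IsLeast (range fun z => ((collGraph LP).dist x (ι z) : ℤ)) (distToSub LP ι x) := by
  obtain ⟨z, hz⟩ : distToSub LP ι x ∈ range fun z => (collGraph LP).dist x (ι z) :=
    Nat.sInf_mem (range_nonempty _)
  refine ⟨⟨z, congrArg Nat.cast hz⟩, ?_⟩
  rintro _ ⟨w, rfl⟩
  exact Nat.cast_le.2 (Nat.sInf_le ⟨w, rfl⟩)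

end

/-- If a near polygon `N` is a full isometrically embedded
subgeometry of a near polygon `N'`, then for every point `x` of `N'` the
function `f_x : y ↦ d_{N'}(x,y) - d_{N'}(x,P)` is a valuation of `N`. -/
theorem inducedVal_isValuation {Q P : Type*} {dQ dP : ℕ}
    (N : NearPolygon Q dQ) (N' : NearPolygon P dP) (ι : Q → P)
    (emb : IsFullIsomEmb N.Lines N'.Lines ι) (x : P) :
    IsValuation N.Lines (inducedVal N'.Lines ι x) := by
  have : Nonempty Q := N.connected.nonempty
  have hsemi : IsSemiValuation N.Lines fun y => ((collGraph N'.Lines).dist x (ι y) : ℤ) :=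
    (N'.isSemiValuation_dist x).comp_of_image_mem emb.inj emb.line_map
  exact hsemi.isValuation_sub (isLeast_range_dist_distToSub N'.Lines ι x)
end

section
/- Let N = (P, L) be a near polygon that is a full isometrically embedded subgeometry of a near polygon N' in which every line is incident with exactly three points, and for every point x of N' let f_x be the valuation of N defined by f_x(y) = d_{N'}(x,y) − d_{N'}(x,P). If {x1, x2, x3} is a line of N', then f_{x1} * f_{x2} = f_{x3}; in particular, if two of f_{x1}, f_{x2}, f_{x3} coincide then all three are equal. -/
/-!
Seen from a point `y` of the subgeometry, one point of the line `{x₁, x₂, x₃}` is nearest and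
the other two are one step further away, so the three distances are determined by one of their
differences. For the canonical `ε = d(x₁,P) - d(x₂,P)` this makes `f₃'` equal to
`d(x₃,·) - d(x₁,P)`, a translate of `f_{x₃}`.

Any other admissible `ε` confines `d(x₁,·) - d(x₂,·)` to two consecutive values on `P`. On a
line of `N`, which is a line of `N'`, the points nearest to `x₁` and to `x₂` must then coincide
(otherwise the difference would jump by `2`), so the difference is constant on lines and hence,
`N` being connected, constant. Then `f_{x₁} = f_{x₂} = f_{x₃}`, and `f ∗ f = f` is immediate.
The same rigidity gives the last clause.
-/

open Set

def IsLineTriple (a b c : ℤ) : Prop :=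
  (b = a + 1 ∧ c = a + 1) ∨ (a = b + 1 ∧ c = b + 1) ∨ (a = c + 1 ∧ b = c + 1)

namespace IsLineTriple

variable {a b c a' b' c' : ℤ}

lemma abs_sub_le_one (h : IsLineTriple a b c) : |a - b| ≤ 1 := by
  unfold IsLineTriple at h; rw [abs_le]; omega

/-- One pairwise difference determines the whole pattern of a line triple. -/
lemma sub_eq_sub_iff (h : IsLineTriple a b c) (h' : IsLineTriple a' b' c') :
    (a - b = a' - b' ↔ c - a = c' - a') ∧ (a - b = a' - b' ↔ c - b = c' - b') := by
  unfold IsLineTriple at h h'; omega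

end IsLineTriple

section IsLeastRange

variable {Q : Type*} {g g' : Q → ℤ} {m m' : ℤ}

lemma isLeast_range_add_const (hm : IsLeast (range g) m) (c : ℤ) :
    IsLeast (range fun y => g y + c) (m + c) := by
  obtain ⟨⟨y, rfl⟩, hle⟩ := hm
  refine ⟨⟨y, rfl⟩, ?_⟩
  rintro _ ⟨z, rfl⟩
  simpa using hle ⟨z, rfl⟩

lemma sub_eq_sub_of_forall_eq_add {c : ℤ} (h : ∀ y, g y = g' y + c)
    (hm : IsLeast (range g) m) (hm' : IsLeast (range g') m') (y : Q) :
    g y - m = g' y - m' := by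
  have : m = m' + c := hm.unique (by simpa only [← h] using isLeast_range_add_const hm' c)
  rw [h, this]; ring

lemma exists_isLeast_range_sub_eq {f h : Q → ℤ} {c : ℤ} (hfh : ∀ y, h y = f y + c)
    (hf : IsLeast (range f) 0) : ∃ m, IsLeast (range h) m ∧ ∀ y, f y = h y - m :=
  ⟨c, by simpa only [← hfh, zero_add] using isLeast_range_add_const hf c,
    fun y => by rw [hfh]; ring⟩

end IsLeastRange

lemma starFun_self {Q : Type*} (f : Q → ℤ) (ε : ℤ) (y : Q) :
    starFun f f ε y = f y + if ε = 0 then -1 else max 0 (-ε) := by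
  unfold starFun
  split_ifs <;> omega

section LineTriple

variable {Q : Type*} {g₁ g₂ g₃ : Q → ℤ} {m₁ m₂ m₃ : ℤ}
  (hg : ∀ y, IsLineTriple (g₁ y) (g₂ y) (g₃ y))
include hg

lemma abs_sub_le_one_of_isLeast (hm₁ : IsLeast (range g₁) m₁) (hm₂ : IsLeast (range g₂) m₂) :
    |m₁ - m₂| ≤ 1 := by
  obtain ⟨⟨y₁, rfl⟩, hle₁⟩ := hm₁
  obtain ⟨⟨y₂, rfl⟩, hle₂⟩ := hm₂
  have h₁ := (hg y₁).abs_sub_le_one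
  have h₂ := (hg y₂).abs_sub_le_one
  have := hle₁ ⟨y₂, rfl⟩
  have := hle₂ ⟨y₁, rfl⟩
  rw [abs_le] at *
  omega

lemma starFun_normalized_eq (y : Q) :
    starFun (fun y => g₁ y - m₁) (fun y => g₂ y - m₂) (m₁ - m₂) y = g₃ y - m₁ := by
  have := hg y
  unfold IsLineTriple at this
  simp only [starFun, max_def]
  split_ifs <;> omega

lemma normalized_eq_of_sub_const (hm₁ : IsLeast (range g₁) m₁) (hm₂ : IsLeast (range g₂) m₂)
    (hm₃ : IsLeast (range g₃) m₃) (hc : ∀ y z, g₁ y - g₂ y = g₁ z - g₂ z) :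
    (fun y => g₁ y - m₁) = (fun y => g₂ y - m₂) ∧
      (fun y => g₂ y - m₂) = (fun y => g₃ y - m₃) := by
  obtain ⟨y₀, -⟩ := hm₁.1
  have h₁₂ : ∀ y, g₁ y = g₂ y + (g₁ y₀ - g₂ y₀) := fun y => by linarith [hc y y₀]
  have h₃₁ : ∀ y, g₃ y = g₁ y + (g₃ y₀ - g₁ y₀) := fun y => by
    linarith [((hg y).sub_eq_sub_iff (hg y₀)).1.1 (hc y y₀)]
  have e₁₂ := sub_eq_sub_of_forall_eq_add h₁₂ hm₁ hm₂
  have e₃₁ := sub_eq_sub_of_forall_eq_add h₃₁ hm₃ hm₁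
  exact ⟨funext e₁₂, funext fun y => (e₁₂ y).symm.trans (e₃₁ y).symm⟩

lemma sub_const_of_normalized_eq
    (h : (fun y => g₁ y - m₁) = (fun y => g₂ y - m₂) ∨
      (fun y => g₁ y - m₁) = (fun y => g₃ y - m₃) ∨
      (fun y => g₂ y - m₂) = (fun y => g₃ y - m₃)) (y z : Q) :
    g₁ y - g₂ y = g₁ z - g₂ z := by
  have hyz := (hg y).sub_eq_sub_iff (hg z)
  rcases h with h | h | h <;> have hy := congrFun h y <;> have hz := congrFun h z
  · linarith
  · exact hyz.1.2 (by linarith)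
  · exact hyz.2.2 (by linarith)

theorem starRel_of_isLineTriple (hm₁ : IsLeast (range g₁) m₁) (hm₂ : IsLeast (range g₂) m₂)
    (hm₃ : IsLeast (range g₃) m₃)
    (hrigid : ∀ a, (∀ y, g₁ y - g₂ y = a ∨ g₁ y - g₂ y = a + 1) →
      ∀ y z, g₁ y - g₂ y = g₁ z - g₂ z) :
    StarRel (fun y => g₁ y - m₁) (fun y => g₂ y - m₂) (fun y => g₃ y - m₃) ∧
      ((fun y => g₁ y - m₁) = (fun y => g₂ y - m₂) ∨
          (fun y => g₁ y - m₁) = (fun y => g₃ y - m₃) ∨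
          (fun y => g₂ y - m₂) = (fun y => g₃ y - m₃) →
        (fun y => g₁ y - m₁) = (fun y => g₂ y - m₂) ∧
          (fun y => g₂ y - m₂) = (fun y => g₃ y - m₃)) := by
  have hf₃ : IsLeast (range fun y => g₃ y - m₃) 0 := by
    simpa only [← sub_eq_add_neg, sub_self] using isLeast_range_add_const hm₃ (-m₃)
  refine ⟨⟨⟨m₁ - m₂, ?_, fun y => ?_⟩, fun ε _ hε => ?_⟩,
    fun h => normalized_eq_of_sub_const hg hm₁ hm₂ hm₃ (sub_const_of_normalized_eq hg h)⟩
  · have := abs_sub_le_one_of_isLeast hg hm₁ hm₂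
    rw [abs_le] at this
    simp only [mem_insert_iff, mem_singleton_iff]
    omega
  · convert (hg y).abs_sub_le_one using 2
    ring
  by_cases hε₀ : ε = m₁ - m₂
  · subst hε₀
    exact exists_isLeast_range_sub_eq (c := m₃ - m₁)
      (fun y => by rw [starFun_normalized_eq hg]; ring) hf₃
  · have hpair : ∀ y, g₁ y - g₂ y = (if m₁ - m₂ < ε then -1 else 0) ∨
        g₁ y - g₂ y = (if m₁ - m₂ < ε then -1 else 0) + 1 := fun y => by
      have h₁ : |g₁ y - m₁ - (g₂ y - m₂) + ε| ≤ 1 := hε y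
      have h₂ := (hg y).abs_sub_le_one
      rw [abs_le] at h₁ h₂
      split_ifs <;> omega
    obtain ⟨h₁₂, h₂₃⟩ := normalized_eq_of_sub_const hg hm₁ hm₂ hm₃ (hrigid _ hpair)
    rw [h₁₂, h₂₃]
    exact exists_isLeast_range_sub_eq (starFun_self _ ε) hf₃

end LineTriple

namespace NearPolygon

variable {P : Type*} {d : ℕ} (N : NearPolygon P d)

lemma exists_dist_eq_add_one {L : Set P} (hL : L ∈ N.Lines) (x : P) :
    ∃ u ∈ L, ∀ v ∈ L, v ≠ u →
      (collGraph N.Lines).dist x v = (collGraph N.Lines).dist x u + 1 := by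
  obtain ⟨u, ⟨huL, hmin⟩, huniq⟩ := N.near x L hL
  refine ⟨u, huL, fun v hvL hvu => ?_⟩
  have hadj : (collGraph N.Lines).Adj u v := ⟨Ne.symm hvu, L, hL, huL, hvL⟩
  have htri : (collGraph N.Lines).dist x v ≤
      (collGraph N.Lines).dist x u + (collGraph N.Lines).dist u v :=
    N.connected.dist_triangle
  have hne : (collGraph N.Lines).dist x v ≠ (collGraph N.Lines).dist x u := fun heq =>
    hvu (huniq v ⟨hvL, fun z hz => heq ▸ hmin z hz⟩)
  rw [SimpleGraph.dist_eq_one_iff_adj.2 hadj] at htri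
  have := hmin v hvL
  omega

lemma isLineTriple_dist {x₁ x₂ x₃ : P} (h₁₂ : x₁ ≠ x₂) (h₁₃ : x₁ ≠ x₃) (h₂₃ : x₂ ≠ x₃)
    (hL : ({x₁, x₂, x₃} : Set P) ∈ N.Lines) (p : P) :
    IsLineTriple ((collGraph N.Lines).dist x₁ p) ((collGraph N.Lines).dist x₂ p)
      ((collGraph N.Lines).dist x₃ p) := by
  obtain ⟨u, hu, hdist⟩ := N.exists_dist_eq_add_one hL p
  simp only [SimpleGraph.dist_comm (v := p)]
  unfold IsLineTriple
  rcases hu with rfl | rfl | rfl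
  · have := hdist x₂ (by simp) h₁₂.symm
    have := hdist x₃ (by simp) h₁₃.symm
    omega
  · have := hdist x₁ (by simp) h₁₂
    have := hdist x₃ (by simp) h₂₃.symm
    omega
  · have := hdist x₁ (by simp) h₁₃
    have := hdist x₂ (by simp) h₂₃
    omega

lemma dist_sub_dist_eq_of_mem_line {M : Set P} (hM : M ∈ N.Lines) {x₁ x₂ : P} {a : ℤ}
    (H : ∀ p ∈ M, ((collGraph N.Lines).dist x₁ p - (collGraph N.Lines).dist x₂ p : ℤ) = a ∨
      ((collGraph N.Lines).dist x₁ p - (collGraph N.Lines).dist x₂ p : ℤ) = a + 1)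
    {p q : P} (hp : p ∈ M) (hq : q ∈ M) :
    ((collGraph N.Lines).dist x₁ p - (collGraph N.Lines).dist x₂ p : ℤ) =
      (collGraph N.Lines).dist x₁ q - (collGraph N.Lines).dist x₂ q := by
  obtain ⟨u₁, hu₁, hdist₁⟩ := N.exists_dist_eq_add_one hM x₁
  obtain ⟨u₂, hu₂, hdist₂⟩ := N.exists_dist_eq_add_one hM x₂
  have hu : u₁ = u₂ := by
    by_contra hne
    have := hdist₁ u₂ hu₂ (Ne.symm hne)
    have := hdist₂ u₁ hu₁ hne
    rcases H u₁ hu₁ with h | h <;> rcases H u₂ hu₂ with h' | h' <;> omega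
  subst hu
  have key : ∀ w ∈ M, ((collGraph N.Lines).dist x₁ w - (collGraph N.Lines).dist x₂ w : ℤ) =
      (collGraph N.Lines).dist x₁ u₁ - (collGraph N.Lines).dist x₂ u₁ := fun w hw => by
    by_cases hwu : w = u₁
    · rw [hwu]
    · rw [hdist₁ w hw hwu, hdist₂ w hw hwu]
      push_cast
      ring
  rw [key p hp, key q hq]

lemma eq_of_forall_mem_line {α : Type*} (D : P → α)
    (hD : ∀ L ∈ N.Lines, ∀ u ∈ L, ∀ v ∈ L, D u = D v) (u v : P) : D u = D v := by
  obtain ⟨w⟩ := N.connected.preconnected u v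
  induction w with
  | nil => rfl
  | cons h _ ih =>
    obtain ⟨-, L, hL, hu, hv⟩ := h
    exact (hD L hL _ hu _ hv).trans ih

end NearPolygon

lemma isLeast_distToSub {Q P : Type*} [Nonempty Q] (LP : Set (Set P)) (ι : Q → P) (x : P) :
    IsLeast (range fun y => ((collGraph LP).dist x (ι y) : ℤ)) (distToSub LP ι x) := by
  have := (Nat.mono_cast (α := ℤ)).map_isLeast
    (isLeast_csInf (range_nonempty fun y => (collGraph LP).dist x (ι y)))
  rwa [← range_comp] at this

lemma IsFullIsomEmb.dist_sub_dist_eq {Q P : Type*} {dQ dP : ℕ} {N : NearPolygon Q dQ}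
    {N' : NearPolygon P dP} {ι : Q → P} (emb : IsFullIsomEmb N.Lines N'.Lines ι) {x₁ x₂ : P}
    {a : ℤ}
    (H : ∀ y, ((collGraph N'.Lines).dist x₁ (ι y) - (collGraph N'.Lines).dist x₂ (ι y) : ℤ) = a ∨
      ((collGraph N'.Lines).dist x₁ (ι y) - (collGraph N'.Lines).dist x₂ (ι y) : ℤ) = a + 1)
    (y z : Q) :
    ((collGraph N'.Lines).dist x₁ (ι y) - (collGraph N'.Lines).dist x₂ (ι y) : ℤ) =
      (collGraph N'.Lines).dist x₁ (ι z) - (collGraph N'.Lines).dist x₂ (ι z) :=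
  N.eq_of_forall_mem_line (fun y => _) (fun L hL u hu v hv =>
    N'.dist_sub_dist_eq_of_mem_line (emb.line_map L hL) (by rintro _ ⟨w, -, rfl⟩; exact H w)
      ⟨u, hu, rfl⟩ ⟨v, hv, rfl⟩) y z

theorem inducedVal_star_line_general {Q P : Type*} {dQ dP : ℕ}
    (N : NearPolygon Q dQ) (N' : NearPolygon P dP) (ι : Q → P)
    (emb : IsFullIsomEmb N.Lines N'.Lines ι)
    (x1 x2 x3 : P) (h12 : x1 ≠ x2) (h13 : x1 ≠ x3) (h23 : x2 ≠ x3)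
    (hL : ({x1, x2, x3} : Set P) ∈ N'.Lines) :
    StarRel (inducedVal N'.Lines ι x1) (inducedVal N'.Lines ι x2)
        (inducedVal N'.Lines ι x3) ∧
      ((inducedVal N'.Lines ι x1 = inducedVal N'.Lines ι x2 ∨
        inducedVal N'.Lines ι x1 = inducedVal N'.Lines ι x3 ∨
        inducedVal N'.Lines ι x2 = inducedVal N'.Lines ι x3) →
        inducedVal N'.Lines ι x1 = inducedVal N'.Lines ι x2 ∧
        inducedVal N'.Lines ι x2 = inducedVal N'.Lines ι x3) := by
  have : Nonempty Q := N.connected.nonempty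
  exact starRel_of_isLineTriple (fun y => N'.isLineTriple_dist h12 h13 h23 hL (ι y))
    (isLeast_distToSub _ _ x1) (isLeast_distToSub _ _ x2) (isLeast_distToSub _ _ x3)
    fun _ => emb.dist_sub_dist_eq

/-- If a near polygon `N` is a full isometrically embedded
subgeometry of a near polygon `N'` with three points on each line, and
`{x1, x2, x3}` is a line of `N'`, then `f_{x1} * f_{x2} = f_{x3}`; in
particular, if two of `f_{x1}, f_{x2}, f_{x3}` coincide then all three are
equal. -/
theorem inducedVal_star_line {Q P : Type*} {dQ dP : ℕ}
    (N : NearPolygon Q dQ) (N' : NearPolygon P dP) (ι : Q → P)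
    (emb : IsFullIsomEmb N.Lines N'.Lines ι)
    (h3 : ∀ L ∈ N'.Lines, L.ncard = 3)
    (x1 x2 x3 : P) (h12 : x1 ≠ x2) (h13 : x1 ≠ x3) (h23 : x2 ≠ x3)
    (hL : ({x1, x2, x3} : Set P) ∈ N'.Lines) :
    StarRel (inducedVal N'.Lines ι x1) (inducedVal N'.Lines ι x2)
        (inducedVal N'.Lines ι x3) ∧
      ((inducedVal N'.Lines ι x1 = inducedVal N'.Lines ι x2 ∨
        inducedVal N'.Lines ι x1 = inducedVal N'.Lines ι x3 ∨
        inducedVal N'.Lines ι x2 = inducedVal N'.Lines ι x3) →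
        inducedVal N'.Lines ι x1 = inducedVal N'.Lines ι x2 ∧
        inducedVal N'.Lines ι x2 = inducedVal N'.Lines ι x3) :=
  inducedVal_star_line_general N N' ι emb x1 x2 x3 h12 h13 h23 hL
end

section
/- Let N be a near polygon with exactly three points on every line, let f1 and f2 be neighboring valuations of N, and let f3 = f1 * f2. Then: (i) f2 * f1 = f1 * f2 = f3; (ii) f1 and f3 are neighboring valuations and f1 * f3 = f2; (iii) f2 and f3 are neighboring valuations and f2 * f3 = f1. Moreover, if f1 = f2 then f3 = f1 = f2, regardless of the choice of ε ∈ {−1,0,1}. -/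
/-!
At every point `x`, the three integers `f1 x`, `f2 x - ε` and `(f1 * f2) x + m` are, up to order,
`b, b, b - 1` for some `b`. This condition is symmetric in the three functions and invariant under
adding a common constant, and any two entries of such a triple determine the third. Moreover the
`ε` making two distinct valuations neighboring is unique: otherwise their difference takes two
consecutive values only, so it is constant on every line, hence constant on the connected
collinearity graph, which forces the valuations to coincide. Hence the single triple condition
yields every relation `fi * fj = fk`. Three points per line are needed only to see that
`f1 * f2` is again a semi-valuation.
-/

def IsStarTriple (a b c : ℤ) : Prop :=
  (a = b ∧ c = a - 1) ∨ (b = c ∧ a = b - 1) ∨ (c = a ∧ b = c - 1)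

namespace IsStarTriple

variable {a b c a' b' c' : ℤ}

lemma sub_eq_sub (h : IsStarTriple a b c) (h' : IsStarTriple a' b' c') (hab : b - a = b' - a') :
    c - a = c' - a' := by
  unfold IsStarTriple at h h'
  omega

lemma abs_sub_le_one (h : IsStarTriple a b c) : |a - b| ≤ 1 := by
  unfold IsStarTriple at h
  rw [abs_le]
  omega

end IsStarTriple

lemma isStarTriple_starFun {P : Type*} {f1 f2 : P → ℤ} {ε : ℤ} {x : P}
    (h : |f1 x - f2 x + ε| ≤ 1) : IsStarTriple (f1 x) (f2 x - ε) (starFun f1 f2 ε x) := by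
  rw [abs_le] at h
  unfold IsStarTriple starFun
  split_ifs with hx
  · omega
  · rcases le_total (f1 x) (f2 x - ε) with hle | hle
    · rw [max_eq_right hle]; omega
    · rw [max_eq_left hle]; omega

section Geometry

variable {P : Type*} {Lines : Set (Set P)}

lemma eq_of_forall_mem_line {α : Type*} (hconn : (collGraph Lines).Connected) {F : P → α}
    (hF : ∀ L ∈ Lines, ∀ x ∈ L, ∀ y ∈ L, F x = F y) (x y : P) : F x = F y := by
  induction (hconn.preconnected x y).some with
  | nil => rfl
  | cons hadj _ ih =>
    obtain ⟨-, L, hL, hu, hv⟩ := hadj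
    exact (hF L hL _ hu _ hv).trans ih

lemma exists_eq_third_of_ncard_eq_three {L : Set P} (hL : L.ncard = 3) {p q : P}
    (hp : p ∈ L) (hq : q ∈ L) (hpq : p ≠ q) :
    ∃ r ∈ L, r ≠ p ∧ r ≠ q ∧ ∀ x ∈ L, x ≠ p → x ≠ q → x = r := by
  have hsub : ({p, q} : Set P) ⊆ L := Set.insert_subset hp (Set.singleton_subset_iff.2 hq)
  have hcard : (L \ {p, q}).ncard = 1 := by
    rw [Set.ncard_sdiff hsub, hL, Set.ncard_pair hpq]
  obtain ⟨r, hr⟩ := Set.ncard_eq_one.1 hcard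
  have hmem : ∀ x, x ∈ L ∧ x ≠ p ∧ x ≠ q ↔ x = r := fun x => by
    rw [← Set.mem_singleton_iff, ← hr]
    simp
  obtain ⟨hrL, hrp, hrq⟩ := (hmem r).2 rfl
  exact ⟨r, hrL, hrp, hrq, fun x hx hxp hxq => (hmem x).1 ⟨hx, hxp, hxq⟩⟩

namespace IsSemiValuation

lemma of_exists {f : P → ℤ} (h : ∀ L ∈ Lines, ∃ xL ∈ L, ∀ x ∈ L, x ≠ xL → f x = f xL + 1) :
    IsSemiValuation Lines f := by
  intro L hL
  obtain ⟨p, hp, hpL⟩ := h L hL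
  refine ⟨p, ⟨hp, hpL⟩, fun q ⟨hq, hqL⟩ => ?_⟩
  by_contra hqp
  have := hpL q hq hqp
  have := hqL p hp (Ne.symm hqp)
  omega

lemma exists_min {f : P → ℤ} (hf : IsSemiValuation Lines f) {L : Set P} (hL : L ∈ Lines) :
    ∃ p ∈ L, ∀ x ∈ L, x ≠ p → f x = f p + 1 :=
  let ⟨p, ⟨hp, hpL⟩, _⟩ := hf L hL
  ⟨p, hp, hpL⟩

/-- If the minima of `g1` and `g2` on a line coincide, that point is the minimum of `g3` there;
otherwise the third point of the line is. -/
lemma of_isStarTriple (h3 : ∀ L ∈ Lines, L.ncard = 3) {g1 g2 g3 : P → ℤ} {β γ : ℤ}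
    (hg1 : IsSemiValuation Lines g1) (hg2 : IsSemiValuation Lines g2)
    (hT : ∀ x, IsStarTriple (g1 x) (g2 x + β) (g3 x + γ)) : IsSemiValuation Lines g3 := by
  refine of_exists fun L hL => ?_
  obtain ⟨p, hp, hpL⟩ := hg1.exists_min hL
  obtain ⟨q, hq, hqL⟩ := hg2.exists_min hL
  have hTp := hT p
  have hTq := hT q
  unfold IsStarTriple at hTp hTq
  by_cases hpq : p = q
  · subst hpq
    refine ⟨p, hp, fun x hx hxp => ?_⟩
    have := hpL x hx hxp
    have := hqL x hx hxp
    have hTx := hT x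
    unfold IsStarTriple at hTx
    omega
  · obtain ⟨r, hr, hrp, hrq, hLr⟩ := exists_eq_third_of_ncard_eq_three (h3 L hL) hp hq hpq
    have := hpL q hq (Ne.symm hpq)
    have := hqL p hp hpq
    have := hpL r hr hrp
    have := hqL r hr hrq
    have hTr := hT r
    unfold IsStarTriple at hTr
    refine ⟨r, hr, fun x hx hxr => ?_⟩
    by_cases hxp : x = p
    · subst hxp; omega
    · obtain rfl : x = q := by_contra fun hxq => hxr (hLr x hx hxp hxq)
      omega

/-- The two minima of `u` and `v` on a line coincide, since otherwise `u - v` would jump by `2`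
between them. -/
lemma sub_eq_sub_of_abs_le_one (hconn : (collGraph Lines).Connected) {u v : P → ℤ}
    (hu : IsSemiValuation Lines u) (hv : IsSemiValuation Lines v)
    (h : ∀ x y, |(u x - v x) - (u y - v y)| ≤ 1) (x y : P) : u x - v x = u y - v y := by
  refine eq_of_forall_mem_line hconn (F := fun x => u x - v x) (fun L hL => ?_) x y
  obtain ⟨p, hp, hpL⟩ := hu.exists_min hL
  obtain ⟨q, hq, hqL⟩ := hv.exists_min hL
  obtain rfl : p = q := by
    by_contra hpq
    have := hpL q hq (Ne.symm hpq)
    have := hqL p hp hpq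
    have := abs_le.1 (h p q)
    omega
  have hdiff : ∀ x ∈ L, u x - v x = u p - v p := fun x hx => by
    by_cases hxp : x = p
    · rw [hxp]
    · have := hpL x hx hxp
      have := hqL x hx hxp
      omega
  intro x hx y hy
  rw [hdiff x hx, hdiff y hy]

end IsSemiValuation

namespace IsValuation

variable {fa fb : P → ℤ}

lemma eq_of_sub_eq_sub (ha : IsValuation Lines fa) (hb : IsValuation Lines fb)
    (h : ∀ x y, fa x - fb x = fa y - fb y) : fa = fb := by
  obtain ⟨-, ha0, a, ha⟩ := ha
  obtain ⟨-, hb0, b, hb⟩ := hb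
  funext x
  have := h x a
  have := h x b
  have := ha0 b
  have := hb0 a
  omega

lemma of_isLeast {f S : P → ℤ} {m : ℤ} (hf : IsSemiValuation Lines f)
    (hm : IsLeast (Set.range S) m) (hfS : ∀ x, f x = S x - m) : IsValuation Lines f := by
  refine ⟨hf, fun x => ?_, ?_⟩
  · have := hm.2 (Set.mem_range_self x)
    rw [hfS x]
    omega
  · obtain ⟨x, hx⟩ := hm.1
    exact ⟨x, by rw [hfS x, hx, sub_self]⟩

lemma isLeast_range_of_eq_add {f S : P → ℤ} (hf : IsValuation Lines f) {k : ℤ}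
    (hS : ∀ x, S x = f x + k) : IsLeast (Set.range S) k := by
  obtain ⟨-, hf0, x, hx⟩ := hf
  refine ⟨⟨x, by rw [hS x, hx, zero_add]⟩, ?_⟩
  rintro _ ⟨y, rfl⟩
  have := hf0 y
  rw [hS y]
  omega

lemma shift_mem (ha : IsValuation Lines fa) (hb : IsValuation Lines fb) {ε : ℤ}
    (h : ∀ x, |fa x - fb x + ε| ≤ 1) : ε ∈ ({-1, 0, 1} : Set ℤ) := by
  obtain ⟨-, ha0, a, ha⟩ := ha
  obtain ⟨-, hb0, b, hb⟩ := hb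
  have := abs_le.1 (h a)
  have := abs_le.1 (h b)
  have := ha0 b
  have := hb0 a
  simp only [Set.mem_insert_iff, Set.mem_singleton_iff]
  omega

lemma shift_unique (hconn : (collGraph Lines).Connected) (ha : IsValuation Lines fa)
    (hb : IsValuation Lines fb) (hab : fa ≠ fb) {ε ε' : ℤ}
    (h : ∀ x, |fa x - fb x + ε| ≤ 1) (h' : ∀ x, |fa x - fb x + ε'| ≤ 1) : ε = ε' := by
  by_contra hne
  refine hab (ha.eq_of_sub_eq_sub hb (ha.1.sub_eq_sub_of_abs_le_one hconn hb.1 fun x y => ?_))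
  have := abs_le.1 (h x)
  have := abs_le.1 (h y)
  have := abs_le.1 (h' x)
  have := abs_le.1 (h' y)
  rw [abs_le]
  omega

end IsValuation

lemma StarRel.neighboring {f1 f2 f3 : P → ℤ} (h : StarRel f1 f2 f3) : Neighboring f1 f2 :=
  let ⟨ε, _, hε⟩ := h.1
  ⟨ε, hε⟩

/-- For `fa = fb` every shift `ε` is admissible, and each turns `starFun fa fa ε` into a
translate of `fa`. -/
theorem starRel_of_isStarTriple (hconn : (collGraph Lines).Connected) {fa fb fc : P → ℤ}
    (ha : IsValuation Lines fa) (hb : IsValuation Lines fb) (hc : IsValuation Lines fc)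
    {α β : ℤ} (hT : ∀ x, IsStarTriple (fa x) (fb x + α) (fc x + β)) : StarRel fa fb fc := by
  have hα : ∀ x, |fa x - fb x + -α| ≤ 1 := fun x => by
    have := abs_le.1 (hT x).abs_sub_le_one
    rw [abs_le]
    omega
  refine ⟨⟨-α, ha.shift_mem hb hα, hα⟩, fun ε _ hε => ?_⟩
  have hS := fun x => isStarTriple_starFun (hε x)
  obtain ⟨k, hk⟩ : ∃ k, ∀ x, starFun fa fb ε x = fc x + k := by
    by_cases hab : fa = fb
    · subst hab
      obtain ⟨x0, -⟩ := hc.2.2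
      refine ⟨starFun fa fa ε x0 - fc x0, fun x => ?_⟩
      have := (hS x).sub_eq_sub (hS x0) (by ring)
      have := (hT x).sub_eq_sub (hT x0) (by ring)
      omega
    · obtain rfl : ε = -α := ha.shift_unique hconn hb hab hε hα
      refine ⟨β, fun x => ?_⟩
      have := (hS x).sub_eq_sub (hT x) (by ring)
      omega
  exact ⟨k, hc.isLeast_range_of_eq_add hk, fun x => by rw [hk x, add_sub_cancel_right]⟩

end Geometry

theorem star_properties_general {P : Type*} {d : ℕ} (N : NearPolygon P d)
    (h3 : ∀ L ∈ N.Lines, L.ncard = 3)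
    (f1 f2 f3 : P → ℤ)
    (hf1 : IsValuation N.Lines f1) (hf2 : IsValuation N.Lines f2)
    (hstar : StarRel f1 f2 f3) :
    StarRel f2 f1 f3 ∧
      (Neighboring f1 f3 ∧ IsValuation N.Lines f3 ∧ StarRel f1 f3 f2) ∧
      (Neighboring f2 f3 ∧ StarRel f2 f3 f1) ∧
      (f1 = f2 → f3 = f1) := by
  obtain ⟨⟨ε, hεmem, hε⟩, hall⟩ := hstar
  obtain ⟨m, hm, hf3⟩ := hall ε hεmem hε
  have hT : ∀ x, IsStarTriple (f1 x) (f2 x + -ε) (f3 x + m) := fun x => by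
    rw [hf3 x, sub_add_cancel, ← sub_eq_add_neg]
    exact isStarTriple_starFun (hε x)
  have hv3 : IsValuation N.Lines f3 :=
    .of_isLeast (.of_isStarTriple h3 hf1.1 hf2.1 hT) hm hf3
  have hT' : ∀ x, IsStarTriple (f2 x) (f1 x + ε) (f3 x + (m + ε)) ∧
      IsStarTriple (f1 x) (f3 x + m) (f2 x + -ε) ∧
      IsStarTriple (f2 x) (f3 x + (m + ε)) (f1 x + ε) := fun x => by
    have := hT x
    unfold IsStarTriple at *
    omega
  have h213 := starRel_of_isStarTriple N.connected hf2 hf1 hv3 fun x => (hT' x).1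
  have h132 := starRel_of_isStarTriple N.connected hf1 hv3 hf2 fun x => (hT' x).2.1
  have h231 := starRel_of_isStarTriple N.connected hf2 hv3 hf1 fun x => (hT' x).2.2
  refine ⟨h213, ⟨h132.neighboring, hv3, h132⟩, ⟨h231.neighboring, h231⟩, fun h12 => ?_⟩
  subst h12
  refine hv3.eq_of_sub_eq_sub hf1 fun x y => ?_
  have := (hT x).sub_eq_sub (hT y) (by ring)
  omega

/-- Let `N` be a near polygon with exactly three points on every
line, `f1, f2` neighboring valuations of `N` and `f3 = f1 * f2`.  Then
(i) `f2 * f1 = f1 * f2 = f3`; (ii) `f1, f3` are neighboring valuations with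
`f1 * f3 = f2`; (iii) `f2, f3` are neighboring valuations with `f2 * f3 = f1`;
moreover if `f1 = f2` then `f3 = f1 = f2` (regardless of the choice of `ε`,
which is already built into `StarRel`). -/
theorem star_properties {P : Type*} {d : ℕ} (N : NearPolygon P d)
    (h3 : ∀ L ∈ N.Lines, L.ncard = 3)
    (f1 f2 f3 : P → ℤ)
    (hf1 : IsValuation N.Lines f1) (hf2 : IsValuation N.Lines f2)
    (hn : Neighboring f1 f2) (hstar : StarRel f1 f2 f3) :
    StarRel f2 f1 f3 ∧
      (Neighboring f1 f3 ∧ IsValuation N.Lines f3 ∧ StarRel f1 f3 f2) ∧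
      (Neighboring f2 f3 ∧ StarRel f2 f3 f1) ∧
      (f1 = f2 → f3 = f1) :=
  star_properties_general N h3 f1 f2 f3 hf1 hf2 hstar
end

section
/- Let N = (P, L) be a finite near 2d-gon of order (s,t) with d ≥ 1, and let x be a point of N. Then the sum over all points y ∈ P of (−1/s)^{d(x,y)}, computed in ℚ, equals 0. -/
/-!
Every line `L` has a unique point `y` nearest to `x`, and its other `s` points lie at distance
`d(x, y) + 1`, so the weights `(-1/s)^{d(x, ·)}` sum to `(-1/s)^{d(x,y)} (1 + s · (-1/s)) = 0`
along `L`. Summing over all lines counts every point `t + 1` times, so `t + 1` times the total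
sum vanishes.
-/

theorem Finset.sum_neg_inv_pow_eq_zero {ι K : Type*} [Field K] {F : Finset ι} {f : ι → ℕ}
    {s : ℕ} (hs : (s : K) ≠ 0) (hcard : F.card = s + 1) {y : ι} (hy : y ∈ F)
    (hf : ∀ z ∈ F, z ≠ y → f z = f y + 1) :
    ∑ z ∈ F, (-1 / (s : K)) ^ f z = 0 := by
  classical
  have hrest : ∀ z ∈ F.erase y, (-1 / (s : K)) ^ f z = (-1 / (s : K)) ^ f y * (-1 / s) :=
    fun z hz => by rw [hf z (mem_of_mem_erase hz) (ne_of_mem_erase hz), pow_succ]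
  rw [← add_sum_erase _ _ hy, sum_congr rfl hrest, sum_const, card_erase_of_mem hy, hcard,
    Nat.add_sub_cancel, nsmul_eq_mul]
  field_simp
  ring

open Classical in
theorem Set.sum_sum_toFinset_eq_card_smul_sum {P M : Type*} [Fintype P] [AddCommMonoid M]
    (Lines : Set (Set P)) {k : ℕ} (hk : ∀ x, {L | L ∈ Lines ∧ x ∈ L}.ncard = k) (w : P → M) :
    ∑ L ∈ Lines.toFinset, ∑ y ∈ L.toFinset, w y = k • ∑ y, w y := by
  rw [Finset.sum_comm' (t' := Finset.univ) (s' := fun y => {L | L ∈ Lines ∧ y ∈ L}.toFinset)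
    (by simp), Finset.smul_sum]
  simp only [Finset.sum_const, ← Set.ncard_eq_toFinset_card', hk]

namespace NearPolygon

variable {P : Type*} {d : ℕ} (N : NearPolygon P d)

theorem exists_mem_forall_dist_eq_succ (x : P) {L : Set P} (hL : L ∈ N.Lines) :
    ∃ y ∈ L, ∀ z ∈ L, z ≠ y →
      (collGraph N.Lines).dist x z = (collGraph N.Lines).dist x y + 1 := by
  obtain ⟨y, ⟨hyL, hy_min⟩, hy_unique⟩ := N.near x L hL
  refine ⟨y, hyL, fun z hz hzy => le_antisymm ?_ ?_⟩
  · have hadj : (collGraph N.Lines).Adj y z := ⟨hzy.symm, L, hL, hyL, hz⟩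
    simpa [SimpleGraph.dist_eq_one_iff_adj.mpr hadj] using
      N.connected.dist_triangle (u := x) (v := y) (w := z)
  · by_contra! hlt
    have heq := le_antisymm (Nat.lt_succ_iff.mp hlt) (hy_min z hz)
    exact hzy (hy_unique z ⟨hz, fun u hu => heq ▸ hy_min u hu⟩)

variable {N}

theorem hasOrder.s_ne_zero {s t : ℕ} (hord : N.hasOrder s t) (x : P) : s ≠ 0 := by
  rintro rfl
  obtain ⟨L, hL, -⟩ : {L | L ∈ N.Lines ∧ x ∈ L}.Nonempty :=
    Set.nonempty_of_ncard_ne_zero (by simp [hord.2 x])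
  obtain ⟨u, hu, v, hv, huv⟩ := N.two_pts L hL
  obtain ⟨c, rfl⟩ := Set.ncard_eq_one.mp (hord.1 L hL)
  exact huv (hu.trans hv.symm)

open Classical in
theorem sum_neg_inv_pow_dist_eq_zero_of_mem_lines [Fintype P] {s t : ℕ}
    (hord : N.hasOrder s t) (x : P) {L : Set P} (hL : L ∈ N.Lines) :
    ∑ y ∈ L.toFinset, (-1 / (s : ℚ)) ^ (collGraph N.Lines).dist x y = 0 := by
  obtain ⟨y, hyL, hy⟩ := N.exists_mem_forall_dist_eq_succ x hL
  exact Finset.sum_neg_inv_pow_eq_zero (Nat.cast_ne_zero.mpr (hord.s_ne_zero x))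
    (by rw [← Set.ncard_eq_toFinset_card', hord.1 L hL]) (Set.mem_toFinset.mpr hyL)
    fun z hz => hy z (Set.mem_toFinset.mp hz)

end NearPolygon

theorem near_polygon_sum_zero_general {P : Type*} [Fintype P] {d s t : ℕ}
    (N : NearPolygon P d) (hord : N.hasOrder s t) (x : P) :
    ∑ y : P, (-1 / (s : ℚ)) ^ ((collGraph N.Lines).dist x y) = 0 := by
  classical
  have hdouble := Set.sum_sum_toFinset_eq_card_smul_sum N.Lines hord.2
    fun y => (-1 / (s : ℚ)) ^ (collGraph N.Lines).dist x y
  rw [Finset.sum_eq_zero fun L hL => NearPolygon.sum_neg_inv_pow_dist_eq_zero_of_mem_lines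
    hord x (Set.mem_toFinset.mp hL), eq_comm, smul_eq_zero] at hdouble
  exact hdouble.resolve_left (Nat.succ_ne_zero t)

/-- Let `N` be a finite near `2d`-gon of order `(s,t)` with
`d ≥ 1` and let `x` be a point of `N`.  Then
`∑_{y ∈ P} (-1/s)^{d(x,y)} = 0` in `ℚ`. -/
theorem near_polygon_sum_zero {P : Type*} [Fintype P] {d s t : ℕ} (hd : 1 ≤ d)
    (N : NearPolygon P d) (hord : N.hasOrder s t) (x : P) :
    ∑ y : P, (-1 / (s : ℚ)) ^ ((collGraph N.Lines).dist x y) = 0 :=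
  near_polygon_sum_zero_general N hord x
end

section
/- Let N be a near hexagon of order (2,2) with v points in total. Then for every point x of N, the number of points at distance 2 from x equals (v + 9)/3 and the number of points at distance 3 from x equals (2v − 30)/3. -/
/-!
A near polygon of order `(s, t)` is finite: its collinearity graph is locally finite and has bounded
diameter. Fix a point `x`. Every line `L` has a unique point nearest to `x`, at distance `d(x, L)`,
and its other `s` points lie at distance `d(x, L) + 1`. Writing `l_i` for the number of lines with
`d(x, L) = i`, counting incident point-line pairs `(y, L)` with `d(x, y) = i + 1` gives
`(t + 1) |Γ_{i+1}(x)| = l_{i+1} + s l_i`. For a near hexagon of order `(2,2)` with `v` points,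
`l_0 = 3` and `|Γ_1(x)| = 6` give `l_1 = 12`; as there are as many lines as points and
`d(x, L) ≤ 2`, `l_2 = v - 15`, and the equations for `i = 1, 2` give both counts.
-/

namespace SimpleGraph.Connected

variable {V : Type*} {G : SimpleGraph V}

theorem finite_setOf_dist_le (hG : G.Connected) (hfin : ∀ v, (G.neighborSet v).Finite) (x : V) :
    ∀ k : ℕ, {y | G.dist x y ≤ k}.Finite
  | 0 => by simp [hG.dist_eq_zero_iff]
  | k + 1 => by
    refine ((finite_setOf_dist_le hG hfin x k).biUnion fun z _ => (hfin z).insert z).subset ?_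
    intro y (hy : G.dist x y ≤ k + 1)
    rcases Nat.lt_or_ge (G.dist x y) (k + 1) with hlt | hge
    · exact Set.mem_biUnion (Nat.lt_succ_iff.1 hlt) (Set.mem_insert y _)
    obtain ⟨p, hp⟩ := hG.exists_walk_length_eq_dist y x
    have hnil : ¬ p.Nil := fun h => by
      rw [Walk.length_eq_zero_iff.2 h, dist_comm] at hp
      omega
    have htail : G.dist x p.snd ≤ k := by
      rw [dist_comm]
      have := p.length_tail_add_one hnil
      have := dist_le p.tail
      rw [dist_comm] at hp
      omega
    exact Set.mem_biUnion htail (Set.mem_insert_of_mem _ (p.adj_snd hnil).symm)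

theorem finite_of_forall_dist_le (hG : G.Connected) (hfin : ∀ v, (G.neighborSet v).Finite)
    (x : V) {d : ℕ} (hd : ∀ y, G.dist x y ≤ d) : Finite V :=
  Set.finite_univ_iff.1 ((hG.finite_setOf_dist_le hfin x d).subset fun y _ => hd y)

end SimpleGraph.Connected

namespace NearPolygon

variable {P : Type*} {d : ℕ} (N : NearPolygon P d)

theorem finite_neighborSet_of_hasOrder {s t : ℕ} (hord : N.hasOrder s t) (x : P) :
    ((collGraph N.Lines).neighborSet x).Finite := by
  have hline : ∀ L ∈ N.Lines, L.Finite := fun L hL =>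
    Set.finite_of_ncard_ne_zero (by rw [hord.1 L hL]; omega)
  have hpencil : {L | L ∈ N.Lines ∧ x ∈ L}.Finite :=
    Set.finite_of_ncard_ne_zero (by rw [hord.2 x]; omega)
  refine (hpencil.biUnion fun L hL => hline L hL.1).subset ?_
  rintro y ⟨-, L, hL, hxL, hyL⟩
  exact Set.mem_biUnion (show L ∈ {L | L ∈ N.Lines ∧ x ∈ L} from ⟨hL, hxL⟩) hyL

theorem finite_of_hasOrder {s t : ℕ} (hord : N.hasOrder s t) : Finite P := by
  obtain ⟨x⟩ := N.connected.nonempty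
  exact N.connected.finite_of_forall_dist_le (N.finite_neighborSet_of_hasOrder hord) x
    (N.diam_le x)

noncomputable def lineDist (x : P) (L : Set P) : ℕ :=
  sInf ((collGraph N.Lines).dist x '' L)

theorem exists_gate (x : P) {L : Set P} (hL : L ∈ N.Lines) :
    ∃ y ∈ L, (collGraph N.Lines).dist x y = N.lineDist x L ∧
      ∀ z ∈ L, z ≠ y → (collGraph N.Lines).dist x z = N.lineDist x L + 1 := by
  obtain ⟨y, ⟨hyL, hymin⟩, huniq⟩ := N.near x L hL
  have hy : (collGraph N.Lines).dist x y = N.lineDist x L :=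
    le_antisymm (le_csInf ⟨_, y, hyL, rfl⟩ (by rintro _ ⟨z, hz, rfl⟩; exact hymin z hz))
      (Nat.sInf_le ⟨y, hyL, rfl⟩)
  refine ⟨y, hyL, hy, fun z hz hzy => ?_⟩
  have hle := N.connected.dist_triangle (u := x) (v := y) (w := z)
  have hadj : (collGraph N.Lines).Adj y z := ⟨hzy.symm, L, hL, hyL, hz⟩
  rw [SimpleGraph.dist_eq_one_iff_adj.2 hadj] at hle
  have hne : (collGraph N.Lines).dist x z ≠ (collGraph N.Lines).dist x y :=
    fun he => hzy (huniq z ⟨hz, fun w hw => he ▸ hymin w hw⟩)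
  have := hymin z hz
  omega

theorem lineDist_lt {x : P} {L : Set P} (hL : L ∈ N.Lines) : N.lineDist x L < d := by
  obtain ⟨y, hyL, -, hfar⟩ := N.exists_gate x hL
  obtain ⟨a, ha, b, hb, hab⟩ := N.two_pts L hL
  obtain ⟨z, hz, hzy⟩ : ∃ z ∈ L, z ≠ y := by
    by_cases hay : a = y
    · exact ⟨b, hb, hay ▸ hab.symm⟩
    · exact ⟨a, ha, hay⟩
  have := N.diam_le x z
  rw [hfar z hz hzy] at this
  omega

theorem lineDist_eq_zero_iff {x : P} {L : Set P} (hL : L ∈ N.Lines) :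
    N.lineDist x L = 0 ↔ x ∈ L := by
  obtain ⟨y, hyL, hy, -⟩ := N.exists_gate x hL
  constructor
  · intro h
    rw [h, N.connected.dist_eq_zero_iff] at hy
    exact hy ▸ hyL
  · intro hxL
    exact Nat.eq_zero_of_le_zero (Nat.sInf_le ⟨x, hxL, SimpleGraph.dist_self⟩)

theorem ncard_lineDist_eq_zero {s t : ℕ} (hord : N.hasOrder s t) (x : P) :
    {L ∈ N.Lines | N.lineDist x L = 0}.ncard = t + 1 := by
  rw [← hord.2 x]
  congr 1
  ext L
  exact and_congr_right N.lineDist_eq_zero_iff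

theorem ncard_line_inter_sphere {s : ℕ} {L : Set P} (hL : L ∈ N.Lines) (hcard : L.ncard = s + 1)
    (x : P) (i : ℕ) :
    {z ∈ L | (collGraph N.Lines).dist x z = i}.ncard =
      (if N.lineDist x L = i then 1 else 0) + s * (if N.lineDist x L + 1 = i then 1 else 0) := by
  obtain ⟨y, hyL, hy, hfar⟩ := N.exists_gate x hL
  have hdist : ∀ z ∈ L, (collGraph N.Lines).dist x z = i ↔
      (z = y ∧ N.lineDist x L = i) ∨ (z ≠ y ∧ N.lineDist x L + 1 = i) := by
    intro z hz
    by_cases hzy : z = y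
    · subst hzy; simp [hy]
    · simp [hzy, hfar z hz hzy]
  by_cases h0 : N.lineDist x L = i
  · have : {z ∈ L | (collGraph N.Lines).dist x z = i} = {y} := by
      ext z
      constructor
      · rintro ⟨hz, hzi⟩
        rcases (hdist z hz).1 hzi with ⟨rfl, -⟩ | ⟨-, h⟩ <;> [rfl; omega]
      · rintro rfl
        exact ⟨hyL, hy.trans h0⟩
    simp [this, h0]
  by_cases h1 : N.lineDist x L + 1 = i
  · have : {z ∈ L | (collGraph N.Lines).dist x z = i} = L \ {y} := by
      ext z
      simp only [Set.mem_sep_iff, Set.mem_sdiff, Set.mem_singleton_iff]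
      exact ⟨fun ⟨hz, hzi⟩ => ⟨hz, fun hzy => h0 (by rw [← hy, ← hzy, hzi])⟩,
        fun ⟨hz, hzy⟩ => ⟨hz, (hfar z hz hzy).trans h1⟩⟩
    rw [this, Set.ncard_sdiff_singleton_of_mem hyL, hcard]
    simp [h0, h1]
  · have : {z ∈ L | (collGraph N.Lines).dist x z = i} = ∅ := by
      ext z
      simp only [Set.mem_sep_iff, Set.mem_empty_iff_false, iff_false, not_and]
      intro hz hzi
      rcases (hdist z hz).1 hzi with ⟨-, h⟩ | ⟨-, h⟩ <;> contradiction
    simp [this, h0, h1]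

section Finite

variable [Finite P]

theorem ncard_lines_mul {s t : ℕ} (hord : N.hasOrder s t) :
    N.Lines.ncard * (s + 1) = Nat.card P * (t + 1) := by
  classical
  cases nonempty_fintype P
  have h := Finset.card_mul_eq_card_mul (fun (y : P) (L : Set P) => y ∈ L)
    (s := Finset.univ) (t := N.Lines.toFinset) (m := t + 1) (n := s + 1)
    (fun y _ => by
      rw [← hord.2 y, ← Set.ncard_coe_finset]
      simp [Finset.bipartiteAbove])
    (fun L hL => by
      rw [← hord.1 L (by simpa using hL), ← Set.ncard_coe_finset]
      simp [Finset.bipartiteBelow])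
  rw [Set.ncard_eq_toFinset_card', Nat.card_eq_fintype_card, ← Finset.card_univ, h]

theorem ncard_lines_eq_sum_ncard_lineDist_eq (x : P) :
    N.Lines.ncard = ∑ i ∈ Finset.range d, {L ∈ N.Lines | N.lineDist x L = i}.ncard := by
  classical
  cases nonempty_fintype P
  rw [Set.ncard_eq_toFinset_card', Finset.card_eq_sum_card_fiberwise (f := N.lineDist x)
    (t := Finset.range d) fun L hL => by simpa using N.lineDist_lt (by simpa using hL)]
  refine Finset.sum_congr rfl fun i _ => ?_
  rw [← Set.ncard_coe_finset]
  simp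

theorem ncard_sphere_one {s t : ℕ} (hord : N.hasOrder s t) (x : P) :
    {y | (collGraph N.Lines).dist x y = 1}.ncard = s * (t + 1) := by
  classical
  cases nonempty_fintype P
  have h := Finset.card_mul_eq_card_mul (fun (y : P) (L : Set P) => y ∈ L)
    (s := {y | (collGraph N.Lines).dist x y = 1}.toFinset)
    (t := {L | L ∈ N.Lines ∧ x ∈ L}.toFinset) (m := 1) (n := s)
    (fun y hy => by
      obtain ⟨hxy, L, hL, hxL, hyL⟩ : (collGraph N.Lines).Adj x y := by simpa using hy
      refine Finset.card_eq_one.2 ⟨L, Finset.ext fun M => ?_⟩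
      simp only [Finset.bipartiteAbove, Finset.mem_filter, Set.mem_toFinset, Set.mem_ofPred_eq,
        Finset.mem_singleton]
      exact ⟨fun ⟨⟨hM, hxM⟩, hyM⟩ => N.unique_line M hM L hL x y hxy hxM hyM hxL hyL,
        fun hML => hML ▸ ⟨⟨hL, hxL⟩, hyL⟩⟩)
    (fun L hL => by
      obtain ⟨hL, hxL⟩ : L ∈ N.Lines ∧ x ∈ L := by simpa using hL
      rw [← Set.ncard_coe_finset]
      have : ↑({y | (collGraph N.Lines).dist x y = 1}.toFinset.bipartiteBelow (· ∈ ·) L) =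
          L \ {x} := by
        ext y
        simp only [Finset.bipartiteBelow, Finset.coe_filter, Set.mem_toFinset, Set.mem_ofPred_eq,
          SimpleGraph.dist_eq_one_iff_adj, Set.mem_sdiff, Set.mem_singleton_iff]
        exact ⟨fun ⟨hxy, hyL⟩ => ⟨hyL, hxy.ne'⟩,
          fun ⟨hyL, hyx⟩ => ⟨⟨Ne.symm hyx, L, hL, hxL, hyL⟩, hyL⟩⟩
      rw [this, Set.ncard_sdiff_singleton_of_mem hxL, hord.1 L hL, Nat.add_sub_cancel])
  have hpencil : {L | L ∈ N.Lines ∧ x ∈ L}.toFinset.card = t + 1 := by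
    rw [← Set.ncard_eq_toFinset_card']
    exact hord.2 x
  rw [Set.ncard_eq_toFinset_card', ← mul_one (Finset.card _), h, hpencil, mul_comm]

theorem ncard_sphere_succ_mul {s t : ℕ} (hord : N.hasOrder s t) (x : P) (i : ℕ) :
    {y | (collGraph N.Lines).dist x y = i + 1}.ncard * (t + 1) =
      {L ∈ N.Lines | N.lineDist x L = i + 1}.ncard +
        s * {L ∈ N.Lines | N.lineDist x L = i}.ncard := by
  classical
  cases nonempty_fintype P
  have h := Finset.sum_card_bipartiteAbove_eq_sum_card_bipartiteBelow
    (fun (y : P) (L : Set P) => y ∈ L)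
    (s := {y | (collGraph N.Lines).dist x y = i + 1}.toFinset) (t := N.Lines.toFinset)
  have habove : ∀ y ∈ {y | (collGraph N.Lines).dist x y = i + 1}.toFinset,
      (N.Lines.toFinset.bipartiteAbove (· ∈ ·) y).card = t + 1 := fun y _ => by
    rw [← hord.2 y, ← Set.ncard_coe_finset]
    simp [Finset.bipartiteAbove]
  have hbelow : ∀ L ∈ N.Lines.toFinset,
      ({y | (collGraph N.Lines).dist x y = i + 1}.toFinset.bipartiteBelow (· ∈ ·) L).card =
        (if N.lineDist x L = i + 1 then 1 else 0) +
          s * (if N.lineDist x L + 1 = i + 1 then 1 else 0) :=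
    fun L hL => by
      have hL : L ∈ N.Lines := by simpa using hL
      rw [← N.ncard_line_inter_sphere hL (hord.1 L hL), ← Set.ncard_coe_finset]
      congr 1
      ext y
      simp [Finset.bipartiteBelow, and_comm]
  rw [Finset.sum_congr rfl habove, Finset.sum_const, smul_eq_mul, Finset.sum_congr rfl hbelow,
    Finset.sum_add_distrib, ← Finset.mul_sum, Finset.sum_boole, Finset.sum_boole] at h
  rw [Set.ncard_eq_toFinset_card', h, ← Set.ncard_coe_finset, ← Set.ncard_coe_finset]
  simp

end Finite

end NearPolygon

/-- Let `N` be a near hexagon of order `(2,2)` with `v` points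
in total.  Then for every point `x`, the number of points at distance `2`
from `x` equals `(v+9)/3` and the number of points at distance `3` from `x`
equals `(2v-30)/3`. -/
theorem near_hexagon_point_counts {P : Type*} (N : NearPolygon P 3)
    (hord : N.hasOrder 2 2) (x : P) :
    3 * {y : P | (collGraph N.Lines).dist x y = 2}.ncard = Nat.card P + 9 ∧
      3 * {y : P | (collGraph N.Lines).dist x y = 3}.ncard + 30 = 2 * Nat.card P := by
  have := N.finite_of_hasOrder hord
  have hl0 := N.ncard_lineDist_eq_zero hord x
  have hl3 : {L ∈ N.Lines | N.lineDist x L = 3} = ∅ :=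
    Set.eq_empty_of_forall_notMem fun L ⟨hL, h3⟩ => (N.lineDist_lt hL).ne h3
  have e1 := N.ncard_sphere_succ_mul hord x 0
  have e2 := N.ncard_sphere_succ_mul hord x 1
  have e3 := N.ncard_sphere_succ_mul hord x 2
  have hv := N.ncard_lines_mul hord
  have hl := N.ncard_lines_eq_sum_ncard_lineDist_eq x
  rw [zero_add, N.ncard_sphere_one hord x] at e1
  rw [hl3] at e3
  simp only [Finset.sum_range_succ, Finset.sum_range_zero] at hl
  norm_num at e2 e3
  omega
end
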